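/- arXiv:1111.6687 — 3 statements merged into one kernel-verified Lean document; each statement's English description precedes it below -/
import Mathlib

section
/- There exist constants C₀, c₀, c > 0 depending only on H and ε such that if C₀·n^{−2/(k−1)} < p < c₀, then with probability at least 1 − exp( −c · n² p^{k−1} log(1/p) ) the following holds simultaneously for every i ∈ {1,2,3}: |D_1(i)| < θ n p^{k−7/5} and |D_2(i)| < n p^{k−2} log(1/p). -/
open MeasureTheory Real
open scoped Classical

/-- Bernoulli measure on `Bool` with success probability `p`. -/
noncomputable def bern (p : ℝ) : MeasureTheory.Measure Bool :=
  (ENNReal.ofReal p) • MeasureTheory.Measure.dirac true +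
    (ENNReal.ofReal (1 - p)) • MeasureTheory.Measure.dirac false

/-- Sample space measure for the `k`-partite random graph `G(n,p,H)`: one independent
Bernoulli(p) bit for each ordered pair of vertices (only bits with `x.1 < y.1` are used). -/
noncomputable def kpMeasure (k n : ℕ) (p : ℝ) :
    MeasureTheory.Measure ((Fin k × Fin n) → (Fin k × Fin n) → Bool) :=
  MeasureTheory.Measure.pi fun _ => MeasureTheory.Measure.pi fun _ => bern p

/-- The `k`-partite graph `G(n,p,H)` determined by a sample point: the parts are
`V_i = {i} × Fin n`, and `x ∈ V_i`, `y ∈ V_j` may be joined only when `v_i v_j ∈ E(H)`. -/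
def kpGraph {k n : ℕ} (H : SimpleGraph (Fin k))
    (ω : (Fin k × Fin n) → (Fin k × Fin n) → Bool) : SimpleGraph (Fin k × Fin n) where
  Adj x y := H.Adj x.1 y.1 ∧ (if x.1 < y.1 then ω x y else ω y x) = true
  symm := by
    constructor
    intro x y ⟨hadj, h⟩
    refine ⟨hadj.symm, ?_⟩
    rcases lt_or_gt_of_ne hadj.ne with h1 | h1
    · rw [if_pos h1] at h; rw [if_neg (not_lt.mpr h1.le)]; exact h
    · rw [if_neg (not_lt.mpr h1.le)] at h; rw [if_pos h1]; exact h
  loopless := ⟨fun x h => H.loopless.irrefl _ h.1⟩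

/-- A copy of `H` in `G(n,p,H)`: a choice `g i ∈ V_i` of one vertex per part, with
`(i, g i)` and `(j, g j)` adjacent whenever `v_i v_j ∈ E(H)`. -/
def IsCopy {k n : ℕ} (H : SimpleGraph (Fin k))
    (ω : (Fin k × Fin n) → (Fin k × Fin n) → Bool) (g : Fin k → Fin n) : Prop :=
  ∀ i j, H.Adj i j → (kpGraph H ω).Adj (i, g i) (j, g j)

open scoped Classical in
/-- `X_H^{n,p}`: the number of copies of `H` in `G(n,p,H)`. -/
noncomputable def XH {k : ℕ} (H : SimpleGraph (Fin k)) (n : ℕ)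
    (ω : (Fin k × Fin n) → (Fin k × Fin n) → Bool) : ℕ :=
  (Finset.univ.filter fun g : Fin k → Fin n => IsCopy H ω g).card

open scoped Classical in
/-- `Ψ(H,n,p) = n^k p^{e_H}`. -/
noncomputable def psi {k : ℕ} (H : SimpleGraph (Fin k)) (n : ℕ) (p : ℝ) : ℝ :=
  (n : ℝ) ^ k * p ^ H.edgeFinset.card

/-- `δ = δ(k) > 0` is the solution of `(1+δ)^k = 2`, i.e. `δ = 2^{1/k} − 1`. -/
noncomputable def deltaK (k : ℕ) : ℝ := (2 : ℝ) ^ ((1 : ℝ) / k) - 1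

open scoped Classical in
/-- `d_i(x) = |N(x) ∩ V_i|` in `G(n,p,H)`. -/
noncomputable def dPart {k n : ℕ} (H : SimpleGraph (Fin k))
    (ω : (Fin k × Fin n) → (Fin k × Fin n) → Bool) (x : Fin k × Fin n) (i : Fin k) : ℕ :=
  (Finset.univ.filter fun v : Fin n => (kpGraph H ω).Adj x (i, v)).card

/-- `d(x) = max_{i ∈ [k]} d_i(x)`. -/
noncomputable def dMax {k n : ℕ} (H : SimpleGraph (Fin k))
    (ω : (Fin k × Fin n) → (Fin k × Fin n) → Bool) (x : Fin k × Fin n) : ℕ :=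
  Finset.univ.sup (dPart H ω x)

/-- A vertex `x` is high degree if `d(x) > (1+δ)np`. -/
def HighVtx {k n : ℕ} (H : SimpleGraph (Fin k)) (p : ℝ)
    (ω : (Fin k × Fin n) → (Fin k × Fin n) → Bool) (x : Fin k × Fin n) : Prop :=
  (1 + deltaK k) * n * p < (dMax H ω x : ℝ)

/-- A copy `g` is type one if it contains a high-degree vertex from `A ∪ B ∪ C`
(the first three parts). -/
def TypeOne {k n : ℕ} (H : SimpleGraph (Fin k)) (p : ℝ)
    (ω : (Fin k × Fin n) → (Fin k × Fin n) → Bool) (g : Fin k → Fin n) : Prop :=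
  ∃ i : Fin k, (i : ℕ) < 3 ∧ HighVtx H p ω (i, g i)

open scoped Classical in
/-- `d(x,y) = max_{j ≥ 4} |N(x) ∩ N(y) ∩ V_j|` (parts are indexed from `0`, so
`j ≥ 4` in the paper's 1-indexing means `3 ≤ j` here). -/
noncomputable def dPair {k n : ℕ} (H : SimpleGraph (Fin k))
    (ω : (Fin k × Fin n) → (Fin k × Fin n) → Bool) (x y : Fin k × Fin n) : ℕ :=
  (Finset.univ.filter fun j : Fin k => 3 ≤ (j : ℕ)).sup fun j =>
    (Finset.univ.filter fun v : Fin n =>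
      (kpGraph H ω).Adj x (j, v) ∧ (kpGraph H ω).Adj y (j, v)).card

/-- A pair `(x,y)` is high degree if `d(x,y) > n p^{3/2}`. -/
def HighPair {k n : ℕ} (H : SimpleGraph (Fin k)) (p : ℝ)
    (ω : (Fin k × Fin n) → (Fin k × Fin n) → Bool) (x y : Fin k × Fin n) : Prop :=
  (n : ℝ) * p ^ ((3 : ℝ) / 2) < (dPair H ω x y : ℝ)

/-- A copy `g` is type two if `k ≥ 5` and it contains a high-degree pair belonging to
`A' × C'` or `B' × C'` (primes denoting non-high-degree vertices); here `i₀, i₁, i₂`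
are the indices of the parts `A`, `B`, `C`.  For `k = 4` no copy is type two. -/
def TypeTwo {k n : ℕ} (H : SimpleGraph (Fin k)) (p : ℝ)
    (ω : (Fin k × Fin n) → (Fin k × Fin n) → Bool) (i₀ i₁ i₂ : Fin k)
    (g : Fin k → Fin n) : Prop :=
  5 ≤ k ∧
    ((¬ HighVtx H p ω (i₀, g i₀) ∧ ¬ HighVtx H p ω (i₂, g i₂) ∧
        HighPair H p ω (i₀, g i₀) (i₂, g i₂)) ∨
     (¬ HighVtx H p ω (i₁, g i₁) ∧ ¬ HighVtx H p ω (i₂, g i₂) ∧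
        HighPair H p ω (i₁, g i₁) (i₂, g i₂)))

/-- `s = min{ log(1/p), n^{k−2} p^{(k−1)(k−2)/2} }`. -/
noncomputable def sReg (k n : ℕ) (p : ℝ) : ℝ :=
  min (Real.log (1 / p)) ((n : ℝ) ^ (k - 2) * p ^ ((k - 1) * (k - 2) / 2))

/-- `ζ = 3^{k−2} Ψ(H,n,p)/(n² p^{k−1} s)` for `k ≥ 5` and
`ζ = 225 Ψ(H,n,p)/(n² p³ s)` for `k = 4`. -/
noncomputable def zeta {k : ℕ} (H : SimpleGraph (Fin k)) (n : ℕ) (p : ℝ) : ℝ :=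
  if 5 ≤ k then (3 : ℝ) ^ (k - 2) * psi H n p / ((n : ℝ) ^ 2 * p ^ (k - 1) * sReg k n p)
  else 225 * psi H n p / ((n : ℝ) ^ 2 * p ^ 3 * sReg k n p)

open scoped Classical in
/-- `w*(a,b)`: the number of copies of `H` containing `a ∈ A` and `b ∈ B` that are
neither type one nor type two. -/
noncomputable def wStar {k n : ℕ} (H : SimpleGraph (Fin k)) (p : ℝ)
    (ω : (Fin k × Fin n) → (Fin k × Fin n) → Bool) (i₀ i₁ i₂ : Fin k)
    (a b : Fin n) : ℕ :=
  (Finset.univ.filter fun g : Fin k → Fin n =>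
    IsCopy H ω g ∧ g i₀ = a ∧ g i₁ = b ∧ ¬ TypeOne H p ω g ∧
      ¬ TypeTwo H p ω i₀ i₁ i₂ g).card

/-- An edge `ab ∈ ∇(A,B)` is heavy if `w*(a,b) > ζ`. -/
def Heavy {k n : ℕ} (H : SimpleGraph (Fin k)) (p : ℝ)
    (ω : (Fin k × Fin n) → (Fin k × Fin n) → Bool) (i₀ i₁ i₂ : Fin k)
    (a b : Fin n) : Prop :=
  (kpGraph H ω).Adj (i₀, a) (i₁, b) ∧ zeta H n p < (wStar H p ω i₀ i₁ i₂ a b : ℝ)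

open scoped Classical in
/-- `w(x)`: the number of copies of `H` containing the vertex `x = (i, v) ∈ V_i`. -/
noncomputable def wVtx {k n : ℕ} (H : SimpleGraph (Fin k))
    (ω : (Fin k × Fin n) → (Fin k × Fin n) → Bool) (i : Fin k) (v : Fin n) : ℕ :=
  (Finset.univ.filter fun g : Fin k → Fin n => IsCopy H ω g ∧ g i = v).card

open scoped Classical in
/-- `D_1(i) = { x ∈ V_i : d(x) > n p^{2/5} }`. -/
noncomputable def D1 {k n : ℕ} (H : SimpleGraph (Fin k)) (p : ℝ)
    (ω : (Fin k × Fin n) → (Fin k × Fin n) → Bool) (i : Fin k) : Finset (Fin n) :=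
  Finset.univ.filter fun v : Fin n => (n : ℝ) * p ^ ((2 : ℝ) / 5) < (dMax H ω (i, v) : ℝ)

open scoped Classical in
/-- `D_2(i) = { x ∈ V_i : (1+δ)np < d(x) ≤ n p^{2/5} }`. -/
noncomputable def D2 {k n : ℕ} (H : SimpleGraph (Fin k)) (p : ℝ)
    (ω : (Fin k × Fin n) → (Fin k × Fin n) → Bool) (i : Fin k) : Finset (Fin n) :=
  Finset.univ.filter fun v : Fin n =>
    (1 + deltaK k) * n * p < (dMax H ω (i, v) : ℝ) ∧
      (dMax H ω (i, v) : ℝ) ≤ (n : ℝ) * p ^ ((2 : ℝ) / 5)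

/-!
A vertex of `D_1(i)` or `D_2(i)` has at least `s` neighbours in some part, with
`s > n p^{2/5}` resp. `s > (1+δ)np`. The neighbourhoods of distinct vertices of `V_i` are read
off disjoint sets of independent edge bits, so `m` given vertices all have this property with
probability at most `(k · P(Bin(n,p) ≥ s))^m`. A union bound over the `C(n,m) ≤ n^m` choices
of the vertices and the Chernoff bound `P(Bin(n,p) ≥ s) ≤ e^{np(e^t - 1) - ts}`, with
`e^t = p^{-1/2}` resp. `e^t = 1 + δ`, bound the probability that `|D_1(i)| ≥ θ n p^{k-7/5}` or
`|D_2(i)| ≥ n p^{k-2} log(1/p)` by `exp(-Ω(n² p^{k-1} log(1/p)))`. The lower bound on `p` gives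
`np ≥ C₀ n^{1/3}`, which absorbs the factor `nk` lost in the union bound.
-/

open Finset

section Sample

variable {ι : Type*} [Fintype ι] {p : ℝ}

lemma bern_singleton (b : Bool) : bern p {b} = ENNReal.ofReal (if b then p else 1 - p) := by
  cases b <;> simp [bern]

lemma isProbabilityMeasure_bern (h0 : 0 ≤ p) (h1 : p ≤ 1) : IsProbabilityMeasure (bern p) :=
  ⟨by simp [bern, ← ENNReal.ofReal_add h0 (sub_nonneg.2 h1)]⟩

lemma measure_pi_pi_bern_cylinder (h0 : 0 ≤ p) (h1 : p ≤ 1) (S : Finset (ι × ι))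
    (σ : ι × ι → Bool) :
    (Measure.pi fun _ : ι => Measure.pi fun _ : ι => bern p)
        {ω | ∀ q ∈ S, ω q.1 q.2 = σ q} = ∏ q ∈ S, bern p {σ q} := by
  have := isProbabilityMeasure_bern h0 h1
  have hS : {ω : ι → ι → Bool | ∀ q ∈ S, ω q.1 q.2 = σ q} =
      Set.univ.pi fun a => Set.univ.pi fun b => if (a, b) ∈ S then {σ (a, b)} else Set.univ := by
    ext ω
    simp only [Set.mem_ofPred_eq, Set.mem_univ_pi, Prod.forall]
    refine forall₂_congr fun a b => ?_
    split_ifs with h <;> simp [h]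
  rw [hS, Measure.pi_pi]
  simp_rw [Measure.pi_pi, apply_ite (bern p), measure_univ]
  rw [← Fintype.prod_prod_type (fun q => if q ∈ S then bern p {σ q} else 1), prod_ite_mem,
    univ_inter]

lemma measure_pi_pi_bern_cylinder_of_injOn {α : Type*} (h0 : 0 ≤ p) (h1 : p ≤ 1)
    (A : Finset α) (g : α → ι × ι) (hg : Set.InjOn g A) (τ : α → Bool) :
    (Measure.pi fun _ : ι => Measure.pi fun _ : ι => bern p)
        {ω | ∀ a ∈ A, ω (g a).1 (g a).2 = τ a} = ∏ a ∈ A, bern p {τ a} := by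
  classical
  rcases A.eq_empty_or_nonempty with rfl | ⟨a₀, -⟩
  · have := isProbabilityMeasure_bern h0 h1
    simp
  have : Nonempty α := ⟨a₀⟩
  have hσ : ∀ a ∈ A, τ (Function.invFunOn g A (g a)) = τ a := fun a ha =>
    congrArg τ (hg.leftInvOn_invFunOn ha)
  have hset : {ω : ι → ι → Bool | ∀ a ∈ A, ω (g a).1 (g a).2 = τ a} =
      {ω | ∀ q ∈ A.image g, ω q.1 q.2 = τ (Function.invFunOn g A q)} := by
    ext ω
    simp +contextual [hσ]
  rw [hset, measure_pi_pi_bern_cylinder h0 h1, prod_image hg]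
  exact prod_congr rfl fun a ha => by rw [hσ a ha]

end Sample

section Graph

variable {k n : ℕ} {p : ℝ}

lemma isProbabilityMeasure_kpMeasure (h0 : 0 ≤ p) (h1 : p ≤ 1) :
    IsProbabilityMeasure (kpMeasure k n p) := by
  have := isProbabilityMeasure_bern h0 h1
  unfold kpMeasure
  infer_instance

def edgeSlot (x y : Fin k × Fin n) : (Fin k × Fin n) × (Fin k × Fin n) :=
  if x.1 < y.1 then (x, y) else (y, x)

lemma kpGraph_adj_iff (H : SimpleGraph (Fin k))
    (ω : (Fin k × Fin n) → (Fin k × Fin n) → Bool) (x y : Fin k × Fin n) :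
    (kpGraph H ω).Adj x y ↔ H.Adj x.1 y.1 ∧ ω (edgeSlot x y).1 (edgeSlot x y).2 = true := by
  change H.Adj x.1 y.1 ∧ (if x.1 < y.1 then ω x y else ω y x) = true ↔ _
  unfold edgeSlot
  split_ifs <;> rfl

lemma edgeSlot_injOn {i : Fin k} {j : Fin n → Fin k} {T : Finset (Fin n)}
    (hj : ∀ v ∈ T, j v ≠ i) :
    Set.InjOn (fun vu : Fin n × Fin n => edgeSlot (i, vu.1) (j vu.1, vu.2))
      ↑(T ×ˢ (univ : Finset (Fin n))) := by
  rintro ⟨v, u⟩ hvu ⟨v', u'⟩ hvu' heq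
  simp only [coe_product, coe_univ, Set.mem_prod, mem_coe, Set.mem_univ, and_true] at hvu hvu'
  simp only [edgeSlot] at heq
  split_ifs at heq <;> simp only [Prod.ext_iff] at heq ⊢
  · exact ⟨heq.1.2, heq.2.2⟩
  · exact absurd heq.1.1.symm (hj v' hvu')
  · exact absurd heq.1.1 (hj v hvu)
  · exact ⟨heq.2.2, heq.1.2⟩

/-- The neighbours of `(i, v)` in part `j` as read off `ω`, ignoring `H`. -/
def slotNbhd (ω : (Fin k × Fin n) → (Fin k × Fin n) → Bool) (i j : Fin k) (v : Fin n) :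
    Finset (Fin n) :=
  {u | ω (edgeSlot (i, v) (j, u)).1 (edgeSlot (i, v) (j, u)).2 = true}

lemma dPart_le_card_slotNbhd (H : SimpleGraph (Fin k))
    (ω : (Fin k × Fin n) → (Fin k × Fin n) → Bool) (i j : Fin k) (v : Fin n) :
    dPart H ω (i, v) j ≤ #(slotNbhd ω i j v) :=
  card_le_card fun u hu => by
    simp only [slotNbhd, mem_filter, mem_univ, true_and, kpGraph_adj_iff] at hu ⊢
    exact hu.2

lemma dPart_self (H : SimpleGraph (Fin k)) (ω : (Fin k × Fin n) → (Fin k × Fin n) → Bool)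
    (i : Fin k) (v : Fin n) : dPart H ω (i, v) i = 0 := by
  simp [dPart, kpGraph_adj_iff]

lemma prod_bern_decide_mem (F : Finset (Fin n)) :
    ∏ u, bern p {decide (u ∈ F)} =
      ENNReal.ofReal p ^ #F * ENNReal.ofReal (1 - p) ^ (n - #F) := by
  simp only [bern_singleton, decide_eq_true_eq, apply_ite ENNReal.ofReal, prod_ite, prod_const,
    filter_mem_eq_inter, univ_inter]
  rw [filter_notMem_eq_sdiff, ← compl_eq_univ_sdiff, card_compl, Fintype.card_fin]

lemma kpMeasure_slotNbhd_eq (h0 : 0 ≤ p) (h1 : p ≤ 1) {i : Fin k} {j : Fin n → Fin k}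
    {T : Finset (Fin n)} (hj : ∀ v ∈ T, j v ≠ i) (F : Fin n → Finset (Fin n)) :
    kpMeasure k n p {ω | ∀ v ∈ T, slotNbhd ω i (j v) v = F v} =
      ∏ v ∈ T, ENNReal.ofReal p ^ #(F v) * ENNReal.ofReal (1 - p) ^ (n - #(F v)) := by
  have hset : {ω | ∀ v ∈ T, slotNbhd ω i (j v) v = F v} =
      {ω : (Fin k × Fin n) → (Fin k × Fin n) → Bool | ∀ vu ∈ T ×ˢ univ,
        ω (edgeSlot (i, vu.1) (j vu.1, vu.2)).1 (edgeSlot (i, vu.1) (j vu.1, vu.2)).2 =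
          decide (vu.2 ∈ F vu.1)} := by
    ext ω
    simp only [slotNbhd, Finset.ext_iff, mem_filter, mem_univ, true_and, Set.mem_ofPred_eq,
      mem_product, and_true, Prod.forall, Bool.eq_iff_iff (b := decide _), decide_eq_true_iff]
    exact forall_congr' fun v => forall_comm
  rw [hset, kpMeasure, measure_pi_pi_bern_cylinder_of_injOn h0 h1 _ _ (edgeSlot_injOn hj),
    prod_product]
  exact prod_congr rfl fun v _ => prod_bern_decide_mem (F v)

noncomputable def binomialTail (n : ℕ) (p : ℝ) (s : ℕ) : ENNReal :=
  ∑ A : Finset (Fin n) with s ≤ #A, ENNReal.ofReal p ^ #A * ENNReal.ofReal (1 - p) ^ (n - #A)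

/-- The Chernoff bound, from `P(X ≥ s) ≤ e^{-ts} E[e^{tX}]`. -/
lemma binomialTail_le_exp (h0 : 0 ≤ p) (h1 : p ≤ 1) (s : ℕ) {t : ℝ} (ht : 0 ≤ t) :
    binomialTail n p s ≤ ENNReal.ofReal (exp (n * p * (exp t - 1) - t * s)) := by
  have hq : 0 ≤ 1 - p := sub_nonneg.2 h1
  have hreal : binomialTail n p s =
      ENNReal.ofReal (∑ A : Finset (Fin n) with s ≤ #A, p ^ #A * (1 - p) ^ (n - #A)) := by
    rw [binomialTail, ENNReal.ofReal_sum_of_nonneg fun A _ => by positivity]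
    simp only [ENNReal.ofReal_mul (pow_nonneg h0 _), ENNReal.ofReal_pow h0, ENNReal.ofReal_pow hq]
  rw [hreal]
  refine ENNReal.ofReal_le_ofReal ?_
  calc ∑ A : Finset (Fin n) with s ≤ #A, p ^ #A * (1 - p) ^ (n - #A)
      ≤ ∑ A : Finset (Fin n) with s ≤ #A,
          exp (-(t * s)) * ((p * exp t) ^ #A * (1 - p) ^ (n - #A)) := by
        refine sum_le_sum fun A hA => ?_
        have hsA : (s : ℝ) ≤ #A := by exact_mod_cast (mem_filter.1 hA).2
        have hweight : 1 ≤ exp (-(t * s)) * exp t ^ #A := by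
          rw [← exp_nat_mul, ← exp_add, one_le_exp_iff]
          nlinarith
        calc p ^ #A * (1 - p) ^ (n - #A) = 1 * (p ^ #A * (1 - p) ^ (n - #A)) := (one_mul _).symm
          _ ≤ exp (-(t * s)) * exp t ^ #A * (p ^ #A * (1 - p) ^ (n - #A)) := by gcongr
          _ = exp (-(t * s)) * ((p * exp t) ^ #A * (1 - p) ^ (n - #A)) := by ring
    _ ≤ ∑ A : Finset (Fin n), exp (-(t * s)) * ((p * exp t) ^ #A * (1 - p) ^ (n - #A)) :=
        sum_le_sum_of_subset_of_nonneg (filter_subset _ _) fun _ _ _ => by positivity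
    _ = exp (-(t * s)) * (p * (exp t - 1) + 1) ^ n := by
        rw [← mul_sum, Fin.sum_pow_mul_eq_add_pow]
        ring_nf
    _ ≤ exp (-(t * s)) * exp (p * (exp t - 1)) ^ n := by
        have : 0 ≤ p * (exp t - 1) := mul_nonneg h0 (sub_nonneg.2 (one_le_exp ht))
        gcongr
        exact add_one_le_exp _
    _ = exp (n * p * (exp t - 1) - t * s) := by
        rw [← exp_nat_mul, ← exp_add]
        ring_nf

lemma kpMeasure_forall_le_dPart_le (h0 : 0 ≤ p) (h1 : p ≤ 1) (H : SimpleGraph (Fin k)) {s : ℕ}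
    (hs : 1 ≤ s) (i : Fin k) (T : Finset (Fin n)) (j : Fin n → Fin k) :
    kpMeasure k n p {ω | ∀ v ∈ T, s ≤ dPart H ω (i, v) (j v)} ≤
      binomialTail n p s ^ #T := by
  by_cases hji : ∃ v ∈ T, j v = i
  · obtain ⟨v, hv, hvi⟩ := hji
    have hempty : {ω | ∀ v ∈ T, s ≤ dPart H ω (i, v) (j v)} = ∅ :=
      Set.eq_empty_of_forall_notMem fun ω hω => by
        have := hω v hv
        rw [hvi, dPart_self] at this
        omega
    simp [hempty]
  have hj : ∀ v ∈ T, j v ≠ i := fun v hv hvi => hji ⟨v, hv, hvi⟩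
  set P : Finset (Finset (Fin n)) := {A | s ≤ #A}
  set w : Finset (Fin n) → ENNReal :=
    fun A => ENNReal.ofReal p ^ #A * ENNReal.ofReal (1 - p) ^ (n - #A)
  have hcover : {ω | ∀ v ∈ T, s ≤ dPart H ω (i, v) (j v)} ⊆ ⋃ f ∈ T.pi fun _ => P,
      {ω | ∀ v ∈ T, slotNbhd ω i (j v) v = if h : v ∈ T then f v h else ∅} := by
    intro ω hω
    refine Set.mem_biUnion (x := fun v _ => slotNbhd ω i (j v) v) ?_ fun v hv => by simp [hv]
    simp only [mem_coe, mem_pi, P, mem_filter, mem_univ, true_and]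
    exact fun v hv => (hω v hv).trans (dPart_le_card_slotNbhd H ω i (j v) v)
  calc kpMeasure k n p {ω | ∀ v ∈ T, s ≤ dPart H ω (i, v) (j v)}
      ≤ ∑ f ∈ T.pi fun _ => P, kpMeasure k n p
          {ω | ∀ v ∈ T, slotNbhd ω i (j v) v = if h : v ∈ T then f v h else ∅} :=
        (measure_mono hcover).trans (measure_biUnion_finset_le _ _)
    _ = ∑ f ∈ T.pi fun _ => P, ∏ x ∈ T.attach, w (f x.1 x.2) := by
        refine sum_congr rfl fun f _ => ?_
        rw [kpMeasure_slotNbhd_eq h0 h1 hj, ← prod_attach]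
        exact prod_congr rfl fun x _ => by rw [dif_pos x.2]
    _ = ∏ _v ∈ T, ∑ A ∈ P, w A := (prod_sum T (fun _ => P) fun _ A => w A).symm
    _ = binomialTail n p s ^ #T := by rw [prod_const]; rfl

def manyHighDegree (H : SimpleGraph (Fin k)) (i : Fin k) (s m : ℕ) :
    Set ((Fin k × Fin n) → (Fin k × Fin n) → Bool) :=
  {ω | m ≤ #{v | s ≤ dMax H ω (i, v)}}

lemma kpMeasure_manyHighDegree_le (h0 : 0 ≤ p) (h1 : p ≤ 1) (H : SimpleGraph (Fin k)) {s : ℕ}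
    (hs : 1 ≤ s) (i : Fin k) (m : ℕ) :
    kpMeasure k n p (manyHighDegree H i s m) ≤ n.choose m * k ^ m * binomialTail n p s ^ m := by
  -- which `m` vertices have high degree, and in which part each of them attains it
  have hcover : manyHighDegree (n := n) H i s m ⊆
      ⋃ T ∈ powersetCard m (univ : Finset (Fin n)),
        ⋃ j ∈ T.pi fun _ => (univ : Finset (Fin k)),
          {ω | ∀ v ∈ T, s ≤ dPart H ω (i, v) (if h : v ∈ T then j v h else i)} := by
    intro ω hω
    obtain ⟨T, hT, hTm⟩ := exists_subset_card_eq hω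
    have hhigh : ∀ v ∈ T, ∃ b, s ≤ dPart H ω (i, v) b := fun v hv => by
      have hv' := (mem_filter.1 (hT hv)).2
      obtain ⟨b, -, hb⟩ := (Finset.le_sup_iff (show ⊥ < s from hs)).1 hv'
      exact ⟨b, hb⟩
    choose j hj using hhigh
    refine Set.mem_biUnion (mem_powersetCard.2 ⟨subset_univ T, hTm⟩) ?_
    refine Set.mem_biUnion (x := j) (mem_pi.2 fun _ _ => mem_univ _) ?_
    intro v hv
    simpa [hv] using hj v hv
  calc kpMeasure k n p (manyHighDegree H i s m)
      ≤ ∑ T ∈ powersetCard m (univ : Finset (Fin n)),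
          ∑ j ∈ T.pi fun _ => (univ : Finset (Fin k)), kpMeasure k n p
            {ω | ∀ v ∈ T, s ≤ dPart H ω (i, v) (if h : v ∈ T then j v h else i)} :=
        (measure_mono hcover).trans <| (measure_biUnion_finset_le _ _).trans <|
          sum_le_sum fun _ _ => measure_biUnion_finset_le _ _
    _ ≤ ∑ T ∈ powersetCard m (univ : Finset (Fin n)),
          ∑ _j ∈ T.pi fun _ => (univ : Finset (Fin k)), binomialTail n p s ^ m := by
        refine sum_le_sum fun T hT => sum_le_sum fun j _ => ?_
        rw [← (mem_powersetCard.1 hT).2]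
        exact kpMeasure_forall_le_dPart_le h0 h1 H hs i T _
    _ = n.choose m * k ^ m * binomialTail n p s ^ m := by
        rw [sum_congr rfl fun T hT => by
          rw [sum_const, card_pi, prod_const, (mem_powersetCard.1 hT).2, card_univ,
            Fintype.card_fin]]
        rw [sum_const, card_powersetCard, card_univ, Fintype.card_fin, nsmul_eq_mul, nsmul_eq_mul,
          mul_assoc]
        push_cast
        ring

lemma kpMeasure_manyHighDegree_le_exp (h0 : 0 ≤ p) (h1 : p ≤ 1) (H : SimpleGraph (Fin k))
    {s : ℕ} (hs : 1 ≤ s) (i : Fin k) (m : ℕ) {t a : ℝ} (ht : 0 ≤ t)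
    (h : (n * k : ℝ) ≤ exp (t * s - n * p * (exp t - 1) - a)) :
    kpMeasure k n p (manyHighDegree H i s m) ≤ ENNReal.ofReal (exp (-(a * m))) := by
  have hbase : n * k * exp (n * p * (exp t - 1) - t * s) ≤ exp (-a) :=
    calc n * k * exp (n * p * (exp t - 1) - t * s)
        ≤ exp (t * s - n * p * (exp t - 1) - a) * exp (n * p * (exp t - 1) - t * s) := by
          gcongr
      _ = exp (-a) := by rw [← exp_add]; ring_nf
  calc kpMeasure k n p (manyHighDegree H i s m)
      ≤ n.choose m * k ^ m * binomialTail n p s ^ m := kpMeasure_manyHighDegree_le h0 h1 H hs i m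
    _ ≤ ENNReal.ofReal ((n * k * exp (n * p * (exp t - 1) - t * s)) ^ m) := by
        rw [ENNReal.ofReal_pow (by positivity), ENNReal.ofReal_mul (by positivity),
          ENNReal.ofReal_mul (by positivity), ENNReal.ofReal_natCast, ENNReal.ofReal_natCast,
          mul_pow, mul_pow]
        gcongr
        · exact_mod_cast Nat.choose_le_pow n m
        · exact binomialTail_le_exp h0 h1 s ht
    _ ≤ ENNReal.ofReal (exp (-a) ^ m) :=
        ENNReal.ofReal_le_ofReal (pow_le_pow_left₀ (by positivity) hbase m)
    _ = ENNReal.ofReal (exp (-(a * m))) := by rw [← exp_nat_mul]; ring_nf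

lemma card_lt_of_notMem_manyHighDegree (H : SimpleGraph (Fin k))
    {ω : (Fin k × Fin n) → (Fin k × Fin n) → Bool} {i : Fin k} {r y : ℝ} (hr : 0 ≤ r)
    {S : Finset (Fin n)} (hS : ∀ v ∈ S, r < dMax H ω (i, v))
    (hω : ω ∉ manyHighDegree H i (⌊r⌋₊ + 1) ⌈y⌉₊) : (#S : ℝ) < y := by
  by_contra! hy
  refine hω ((Nat.ceil_le.2 hy).trans (card_le_card fun v hv => ?_))
  simpa [Nat.add_one_le_iff, Nat.floor_lt hr] using hS v hv

lemma kpMeasure_manyHighDegree_D1_le (hk : 1 ≤ k) (H : SimpleGraph (Fin k)) (i : Fin k)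
    (hp0 : 0 < p) (hL : 8 ≤ log (1 / p)) {θ : ℝ} (hθ : 0 ≤ θ)
    (hnk : (n * k : ℝ) ≤ exp (n * p)) :
    kpMeasure k n p (manyHighDegree H i (⌊n * p ^ ((2 : ℝ) / 5)⌋₊ + 1)
        ⌈θ * (n * p ^ ((k : ℝ) - 7 / 5))⌉₊) ≤
      ENNReal.ofReal (exp (-(θ / 4 * (n ^ 2 * p ^ (k - 1) * log (1 / p))))) := by
  set L := log (1 / p)
  set s := ⌊n * p ^ ((2 : ℝ) / 5)⌋₊ + 1
  set m := ⌈θ * (n * p ^ ((k : ℝ) - 7 / 5))⌉₊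
  have hlogp : log p = -L := by simp [L, log_inv]
  have hp1 : p ≤ 1 := ((log_neg_iff hp0).1 (by linarith)).le
  have hs : n * p ^ ((2 : ℝ) / 5) ≤ s := by
    simpa [s] using (Nat.lt_floor_add_one (n * p ^ ((2 : ℝ) / 5))).le
  have hm : θ * (n * p ^ ((k : ℝ) - 7 / 5)) ≤ m := Nat.le_ceil _
  -- with `t = L / 2`, i.e. `e^t = p^{-1/2}`, each of the `s` edges costs a factor `p^{1/2}`
  have hpet : p * exp (L / 2) = p ^ ((1 : ℝ) / 2) := by
    rw [rpow_def_of_pos hp0, ← exp_log hp0, ← exp_add, exp_log hp0, hlogp]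
    ring_nf
  have hnpet : n * p * (exp (L / 2) - 1) ≤ s := calc
    n * p * (exp (L / 2) - 1) ≤ n * (p * exp (L / 2)) := by nlinarith [hp0.le]
    _ ≤ n * p ^ ((2 : ℝ) / 5) := by
        rw [hpet]
        exact mul_le_mul_of_nonneg_left (rpow_le_rpow_of_exponent_ge hp0 hp1 (by norm_num))
          n.cast_nonneg
    _ ≤ s := hs
  have hnps : n * p ≤ s := calc
    n * p = n * p ^ (1 : ℝ) := by rw [rpow_one]
    _ ≤ n * p ^ ((2 : ℝ) / 5) :=
        mul_le_mul_of_nonneg_left (rpow_le_rpow_of_exponent_ge hp0 hp1 (by norm_num)) n.cast_nonneg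
    _ ≤ s := hs
  have hsm : θ * (n ^ 2 * p ^ (k - 1)) ≤ s * m := calc
    θ * (n ^ 2 * p ^ (k - 1)) =
        n * p ^ ((2 : ℝ) / 5) * (θ * (n * p ^ ((k : ℝ) - 7 / 5))) := by
        have hexp : p ^ ((2 : ℝ) / 5) * p ^ ((k : ℝ) - 7 / 5) = p ^ (k - 1) := by
          rw [← rpow_add hp0, ← rpow_natCast p, Nat.cast_sub hk]
          ring_nf
        rw [← hexp]
        ring
    _ ≤ s * m := by gcongr
  refine (kpMeasure_manyHighDegree_le_exp hp0.le hp1 H (by omega) i m (t := L / 2)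
    (a := s * L / 4) (by linarith) ?_).trans (ENNReal.ofReal_le_ofReal (exp_le_exp.2 ?_))
  · refine hnk.trans (exp_le_exp.2 ?_)
    nlinarith
  · nlinarith

lemma kpMeasure_manyHighDegree_D2_le (hk : 2 ≤ k) (H : SimpleGraph (Fin k)) (i : Fin k)
    (hp0 : 0 < p) (hp1 : p ≤ 1) {δ β : ℝ} (hδ : 0 ≤ δ) (hβ : 0 ≤ β)
    (hβδ : β ≤ (1 + δ) * log (1 + δ) - δ) (hnk : (n * k : ℝ) ≤ exp (β / 2 * (n * p))) :
    kpMeasure k n p (manyHighDegree H i (⌊(1 + δ) * n * p⌋₊ + 1)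
        ⌈n * p ^ (k - 2) * log (1 / p)⌉₊) ≤
      ENNReal.ofReal (exp (-(β / 2 * (n ^ 2 * p ^ (k - 1) * log (1 / p))))) := by
  set L := log (1 / p)
  set s := ⌊(1 + δ) * n * p⌋₊ + 1
  set m := ⌈n * p ^ (k - 2) * L⌉₊
  have hL : 0 ≤ L := log_nonneg (one_le_one_div hp0 hp1)
  have hs : (1 + δ) * n * p ≤ s := by
    simpa [s] using (Nat.lt_floor_add_one ((1 + δ) * n * p)).le
  have hm : n * p ^ (k - 2) * L ≤ m := Nat.le_ceil _
  have hlog : 0 ≤ log (1 + δ) := log_nonneg (by linarith)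
  have hnp : 0 ≤ n * p := by positivity
  refine (kpMeasure_manyHighDegree_le_exp hp0.le hp1 H (by omega) i m (t := log (1 + δ))
    (a := β / 2 * (n * p)) hlog ?_).trans (ENNReal.ofReal_le_ofReal (exp_le_exp.2 ?_))
  · rw [exp_log (by linarith)]
    refine hnk.trans (exp_le_exp.2 ?_)
    nlinarith [mul_le_mul_of_nonneg_right hs hlog, mul_le_mul_of_nonneg_left hβδ hnp]
  · have hX : n ^ 2 * p ^ (k - 1) * L = n * p * (n * p ^ (k - 2) * L) := by
      rw [show k - 1 = k - 2 + 1 by omega, pow_succ]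
      ring
    rw [hX]
    nlinarith [mul_le_mul_of_nonneg_left hm hnp]

lemma deltaK_pos (hk : 0 < k) : 0 < deltaK k :=
  sub_pos.2 (one_lt_rpow (by norm_num) (by positivity))

lemma lt_one_add_mul_log_one_add {δ : ℝ} (hδ : 0 < δ) : δ < (1 + δ) * log (1 + δ) := by
  have h1δ : 0 < 1 + δ := by linarith
  have h := log_lt_sub_one_of_pos (inv_pos.2 h1δ) (inv_ne_one.2 (by linarith))
  rw [log_inv] at h
  have h' := mul_lt_mul_of_pos_left h h1δ
  rw [mul_sub, mul_inv_cancel₀ h1δ.ne'] at h'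
  linarith

lemma one_sub_exp_le_kpMeasure_D_bounds (hk : 2 ≤ k) (H : SimpleGraph (Fin k)) (hp0 : 0 < p)
    (hL : 8 ≤ log (1 / p)) {θ β c : ℝ} (hθ : 0 ≤ θ) (hβ : 0 ≤ β)
    (hβδ : β ≤ (1 + deltaK k) * log (1 + deltaK k) - deltaK k) (hcθ : c ≤ θ / 8)
    (hcβ : c ≤ β / 4) (hnk : (n * k : ℝ) ≤ exp (min 1 (β / 2) * (n * p)))
    (hX : 2 * k ≤ exp (c * (n ^ 2 * p ^ (k - 1) * log (1 / p)))) :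
    1 - ENNReal.ofReal (exp (-c * (n ^ 2 * p ^ (k - 1) * log (1 / p)))) ≤
      kpMeasure k n p {ω | ∀ i : Fin k, (i : ℕ) < 3 →
        ((D1 H p ω i).card : ℝ) < θ * ((n : ℝ) * p ^ ((k : ℝ) - 7 / 5)) ∧
        ((D2 H p ω i).card : ℝ) < (n : ℝ) * p ^ (k - 2) * log (1 / p)} := by
  set X := (n : ℝ) ^ 2 * p ^ (k - 1) * log (1 / p)
  set E := {ω | ∀ i : Fin k, (i : ℕ) < 3 →
    ((D1 H p ω i).card : ℝ) < θ * ((n : ℝ) * p ^ ((k : ℝ) - 7 / 5)) ∧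
    ((D2 H p ω i).card : ℝ) < (n : ℝ) * p ^ (k - 2) * log (1 / p)}
  set B₁ : Fin k → Set _ := fun i => manyHighDegree H i (⌊n * p ^ ((2 : ℝ) / 5)⌋₊ + 1)
    ⌈θ * (n * p ^ ((k : ℝ) - 7 / 5))⌉₊
  set B₂ : Fin k → Set _ := fun i => manyHighDegree H i (⌊(1 + deltaK k) * n * p⌋₊ + 1)
    ⌈n * p ^ (k - 2) * log (1 / p)⌉₊
  have hδ := deltaK_pos (k := k) (by omega)
  have hp1 : p ≤ 1 := by
    rw [one_div, log_inv] at hL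
    exact ((log_neg_iff hp0).1 (by linarith)).le
  have hX0 : 0 ≤ X := mul_nonneg (by positivity) (by linarith)
  have hnp : 0 ≤ n * p := by positivity
  have := isProbabilityMeasure_kpMeasure (k := k) (n := n) hp0.le hp1
  have hB₁ : ∀ i, kpMeasure k n p (B₁ i) ≤ ENNReal.ofReal (exp (-(2 * c * X))) := fun i =>
    (kpMeasure_manyHighDegree_D1_le (by omega) H i hp0 hL hθ
      (hnk.trans (exp_le_exp.2 (by nlinarith [min_le_left 1 (β / 2)])))).trans
      (ENNReal.ofReal_le_ofReal (exp_le_exp.2 (by nlinarith)))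
  have hB₂ : ∀ i, kpMeasure k n p (B₂ i) ≤ ENNReal.ofReal (exp (-(2 * c * X))) := fun i =>
    (kpMeasure_manyHighDegree_D2_le hk H i hp0 hp1 hδ.le hβ hβδ
      (hnk.trans (exp_le_exp.2 (by nlinarith [min_le_right 1 (β / 2)])))).trans
      (ENNReal.ofReal_le_ofReal (exp_le_exp.2 (by nlinarith)))
  have hcover : Eᶜ ⊆ ⋃ i, (B₁ i ∪ B₂ i) := by
    intro ω hω
    by_contra hB
    simp only [Set.mem_iUnion, Set.mem_union, not_exists, not_or] at hB
    refine hω fun i _ => ⟨?_, ?_⟩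
    · exact card_lt_of_notMem_manyHighDegree H (by positivity)
        (fun v hv => (mem_filter.1 hv).2) (hB i).1
    · exact card_lt_of_notMem_manyHighDegree H (by positivity)
        (fun v hv => (mem_filter.1 hv).2.1) (hB i).2
  rw [← compl_compl E, prob_compl_eq_one_sub (Set.toFinite _).measurableSet]
  refine tsub_le_tsub_left ?_ 1
  calc kpMeasure k n p Eᶜ
      ≤ ∑ i, (kpMeasure k n p (B₁ i) + kpMeasure k n p (B₂ i)) :=
        (measure_mono hcover).trans <| (measure_iUnion_fintype_le _ _).trans <|
          sum_le_sum fun _ _ => measure_union_le _ _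
    _ ≤ ∑ _i : Fin k, 2 * ENNReal.ofReal (exp (-(2 * c * X))) :=
        sum_le_sum fun i _ => by rw [two_mul]; exact add_le_add (hB₁ i) (hB₂ i)
    _ = ENNReal.ofReal (2 * k * exp (-(2 * c * X))) := by
        rw [sum_const, card_univ, Fintype.card_fin, nsmul_eq_mul,
          ENNReal.ofReal_mul (by positivity), ENNReal.ofReal_mul (by positivity),
          ENNReal.ofReal_ofNat, ENNReal.ofReal_natCast]
        ring
    _ ≤ ENNReal.ofReal (exp (-c * X)) := by
        refine ENNReal.ofReal_le_ofReal ?_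
        calc 2 * k * exp (-(2 * c * X)) ≤ exp (c * X) * exp (-(2 * c * X)) := by gcongr
          _ = exp (-c * X) := by rw [← exp_add]; ring_nf

lemma log_mul_le_rpow_one_third {x y : ℝ} (hx : 1 ≤ x) (hy : 1 ≤ y) :
    log (x * y) ≤ (log y + 3) * x ^ ((1 : ℝ) / 3) := by
  have hx3 : 1 ≤ x ^ ((1 : ℝ) / 3) := one_le_rpow hx (by norm_num)
  have hlogx : log x ≤ 3 * x ^ ((1 : ℝ) / 3) := by
    have := log_le_rpow_div (by linarith : 0 ≤ x) (by norm_num : (0 : ℝ) < 1 / 3)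
    linarith [show x ^ ((1 : ℝ) / 3) / (1 / 3) = 3 * x ^ ((1 : ℝ) / 3) by ring]
  rw [log_mul (by positivity) (by positivity)]
  nlinarith [log_nonneg hy]

lemma mul_rpow_one_third_le_mul (hk : 4 ≤ k) {x C : ℝ} (hx : 1 ≤ x) (hC : 0 ≤ C)
    (hp : C * x ^ (-(2 : ℝ) / ((k : ℝ) - 1)) < p) : C * x ^ ((1 : ℝ) / 3) ≤ x * p := by
  have hk' : (4 : ℝ) ≤ k := by exact_mod_cast hk
  have hexp : (1 : ℝ) / 3 ≤ 1 + -(2 : ℝ) / ((k : ℝ) - 1) := by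
    rw [neg_div, ← sub_eq_add_neg, le_sub_comm, div_le_iff₀ (by linarith)]
    linarith
  calc C * x ^ ((1 : ℝ) / 3) ≤ C * x ^ (1 + -(2 : ℝ) / ((k : ℝ) - 1)) := by
        gcongr
    _ = x * (C * x ^ (-(2 : ℝ) / ((k : ℝ) - 1))) := by
        rw [rpow_add (by linarith), rpow_one]
        ring
    _ ≤ x * p := by gcongr

lemma le_sq_mul_pow (hk : 2 ≤ k) {x C : ℝ} (hx : 0 < x) (hC : 1 ≤ C)
    (hp : C * x ^ (-(2 : ℝ) / ((k : ℝ) - 1)) < p) : C ≤ x ^ 2 * p ^ (k - 1) := by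
  have hk1 : ((k - 1 : ℕ) : ℝ) = k - 1 := by rw [Nat.cast_sub (by omega), Nat.cast_one]
  have hk1' : (k : ℝ) - 1 ≠ 0 := by rw [← hk1]; exact_mod_cast (by omega : k - 1 ≠ 0)
  have hpow : (x ^ (-(2 : ℝ) / ((k : ℝ) - 1))) ^ (k - 1) = (x ^ 2)⁻¹ := by
    rw [← rpow_natCast, ← rpow_mul hx.le, hk1, div_mul_cancel₀ _ hk1', rpow_neg hx.le]
    norm_cast
  calc C ≤ C ^ (k - 1) := le_self_pow₀ hC (by omega)
    _ = x ^ 2 * (C * x ^ (-(2 : ℝ) / ((k : ℝ) - 1))) ^ (k - 1) := by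
        rw [mul_pow, hpow]
        field_simp
    _ ≤ x ^ 2 * p ^ (k - 1) := by gcongr

lemma natCast_mul_le_exp (hk : 4 ≤ k) (hn : 0 < n) {C γ : ℝ} (hC : 0 ≤ C) (hγ : 0 ≤ γ)
    (hCγ : log k + 3 ≤ γ * C) (hp : C * (n : ℝ) ^ (-(2 : ℝ) / ((k : ℝ) - 1)) < p) :
    (n * k : ℝ) ≤ exp (γ * (n * p)) := by
  have hn1 : (1 : ℝ) ≤ n := by exact_mod_cast hn
  have hk1 : (1 : ℝ) ≤ k := by exact_mod_cast (by omega : 1 ≤ k)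
  rw [← exp_log (by positivity : (0 : ℝ) < n * k)]
  refine exp_le_exp.2 ((log_mul_le_rpow_one_third hn1 hk1).trans ?_)
  calc (log k + 3) * (n : ℝ) ^ ((1 : ℝ) / 3)
      ≤ γ * C * (n : ℝ) ^ ((1 : ℝ) / 3) := by gcongr
    _ = γ * (C * (n : ℝ) ^ ((1 : ℝ) / 3)) := mul_assoc _ _ _
    _ ≤ γ * (n * p) := mul_le_mul_of_nonneg_left (mul_rpow_one_third_le_mul hk hn1 hC hp) hγ

end Graph

theorem D_sets_size_bound_general {k : ℕ} (hk : 4 ≤ k) (H : SimpleGraph (Fin k))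
    (ε : ℝ) (hε : 0 < ε) :
    ∃ C₀ c₀ c : ℝ, 0 < C₀ ∧ 0 < c₀ ∧ 0 < c ∧ ∀ (n : ℕ) (p : ℝ),
      C₀ * (n : ℝ) ^ (-(2 : ℝ) / ((k : ℝ) - 1)) < p → p < c₀ →
      1 - ENNReal.ofReal (Real.exp (-c * ((n : ℝ) ^ 2 * p ^ (k - 1) * Real.log (1 / p)))) ≤
        kpMeasure k n p {ω | ∀ i : Fin k, (i : ℕ) < 3 →
          ((D1 H p ω i).card : ℝ) < 0.05 * ε * ((n : ℝ) * p ^ ((k : ℝ) - 7 / 5)) ∧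
          ((D2 H p ω i).card : ℝ) < (n : ℝ) * p ^ (k - 2) * Real.log (1 / p)} := by
  set β := (1 + deltaK k) * log (1 + deltaK k) - deltaK k
  have hβ : 0 < β := sub_pos.2 (lt_one_add_mul_log_one_add (deltaK_pos (by omega)))
  set c := min (0.05 * ε / 8) (β / 4)
  have hc : 0 < c := lt_min (by positivity) (by positivity)
  set γ := min 1 (β / 2)
  have hγ : 0 < γ := lt_min one_pos (by positivity)
  -- `2k/c` pays for the union bound over `2k` events; `(log k + 3)/γ` lets `np` beat `log (nk)`
  set C₀ := max (2 * k / c) ((log k + 3) / γ)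
  have hC₀ : 1 ≤ C₀ := le_max_of_le_right <| (one_le_div hγ).2 <| by
    linarith [min_le_left 1 (β / 2), log_natCast_nonneg k]
  refine ⟨C₀, exp (-10), c, by positivity, exp_pos _, hc, fun n p hp hpc => ?_⟩
  rcases n.eq_zero_or_pos with rfl | hn
  · simp
  have hp0 : 0 < p := lt_of_le_of_lt (by positivity) hp
  have hL : 10 ≤ log (1 / p) := by
    rw [one_div, log_inv, le_neg]
    exact ((log_lt_iff_lt_exp hp0).2 hpc).le
  have hnk : (n * k : ℝ) ≤ exp (γ * (n * p)) :=
    natCast_mul_le_exp hk hn (by positivity) hγ.le ((div_le_iff₀' hγ).1 (le_max_right _ _)) hp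
  have hX : 2 * k ≤ exp (c * (n ^ 2 * p ^ (k - 1) * log (1 / p))) := by
    have hXC : C₀ ≤ n ^ 2 * p ^ (k - 1) * log (1 / p) :=
      (le_sq_mul_pow (by omega) (by positivity) hC₀ hp).trans
        (le_mul_of_one_le_right (by positivity) (by linarith))
    have h2k : 2 * k ≤ c * C₀ := (div_le_iff₀' hc).1 (le_max_left _ _)
    linarith [mul_le_mul_of_nonneg_left hXC hc.le,
      add_one_le_exp (c * (n ^ 2 * p ^ (k - 1) * log (1 / p)))]
  exact one_sub_exp_le_kpMeasure_D_bounds (by omega) H hp0 (by linarith) (by positivity) hβ.le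
    le_rfl (min_le_left _ _) (min_le_right _ _) hnk hX

/-- inequality (5.1) of DeMarco–Kahn.  With large probability, for
every `i ∈ {1,2,3}`: `|D_1(i)| < θ n p^{k−7/5}` and `|D_2(i)| < n p^{k−2} log(1/p)`,
where `θ = 0.05ε`. -/
theorem D_sets_size_bound {k : ℕ} (hk : 4 ≤ k) (H : SimpleGraph (Fin k)) [DecidableRel H.Adj]
    (i₀ i₁ i₂ : Fin k) (hi₀ : (i₀ : ℕ) = 0) (hi₁ : (i₁ : ℕ) = 1) (hi₂ : (i₂ : ℕ) = 2)
    (hmin : ∀ v : Fin k, k - 2 ≤ H.degree v)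
    (hsorted : ∀ i j : Fin k, i ≤ j → H.degree j ≤ H.degree i)
    (hdeg₁ : H.degree i₀ = k - 1)
    (h₂₃ : H.degree i₁ = k - 2 → ¬ H.Adj i₁ i₂)
    (ε : ℝ) (hε : 0 < ε) :
    ∃ C₀ c₀ c : ℝ, 0 < C₀ ∧ 0 < c₀ ∧ 0 < c ∧ ∀ (n : ℕ) (p : ℝ),
      C₀ * (n : ℝ) ^ (-(2 : ℝ) / ((k : ℝ) - 1)) < p → p < c₀ →
      1 - ENNReal.ofReal (Real.exp (-c * ((n : ℝ) ^ 2 * p ^ (k - 1) * Real.log (1 / p)))) ≤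
        kpMeasure k n p {ω | ∀ i : Fin k, (i : ℕ) < 3 →
          ((D1 H p ω i).card : ℝ) < 0.05 * ε * ((n : ℝ) * p ^ ((k : ℝ) - 7 / 5)) ∧
          ((D2 H p ω i).card : ℝ) < (n : ℝ) * p ^ (k - 2) * Real.log (1 / p)} :=
  D_sets_size_bound_general hk H ε hε
end

section
/- Let r ≥ 2 and let ℓ ≥ 0 be a real number. If G is an r-partite graph with parts U_1, …, U_r (each part an independent set) such that for every pair 1 ≤ i < j ≤ r the number of edges of G between U_i and U_j is at most ℓ, then the number of copies of K_r in G (equivalently, the number of r-cliques of G) is at most ℓ^{r/2}. -/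
/-!
Every `r`-clique meets each part in exactly one vertex, so it is the image of a transversal
clique: a tuple `f` with `f i ∈ U i` whose entries are pairwise adjacent. Transversal cliques are
counted by peeling off two parts: there are at most `ℓ` edges `ab` between the first two parts,
and those extending a given edge `ab` are the transversal cliques of the common neighbourhoods of
`a` and `b` in the remaining parts, which again span at most `ℓ` edges pairwise. This reduces even
`r` to `r = 0` and odd `r` to the triangle case. There, with `d x` the number of neighbours of
`x` in the third part and `c(a, b) ≤ min (d a) (d b)` the number of common ones, Cauchy–Schwarz
bounds the number of triangles `∑_{ab} c(a, b)` by `√(e₀₁ ∑_{ab} d a * d b) ≤ √(e₀₁ e₀₂ e₁₂)`.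
-/

open Finset

namespace SimpleGraph

variable {V : Type*} (G : SimpleGraph V)

open scoped Classical in
noncomputable def transversalCliques {n : ℕ} (A : Fin n → Finset V) : Finset (Fin n → V) :=
  {f ∈ Fintype.piFinset A | Pairwise fun i j => G.Adj (f i) (f j)}

theorem card_transversalCliques_zero (A : Fin 0 → Finset V) : #(G.transversalCliques A) = 1 := by
  simp [transversalCliques, Subsingleton.pairwise]

variable {G} in
theorem mem_transversalCliques {n : ℕ} {A : Fin n → Finset V} {f : Fin n → V} :
    f ∈ G.transversalCliques A ↔
      (∀ i, f i ∈ A i) ∧ Pairwise fun i j => G.Adj (f i) (f j) := by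
  simp [transversalCliques]

variable [DecidableRel G.Adj]

theorem sum_interedges {M : Type*} [AddCommMonoid M] (s t : Finset V) (f : V × V → M) :
    ∑ p ∈ G.interedges s t, f p = ∑ a ∈ s, ∑ b ∈ t with G.Adj a b, f (a, b) := by
  simp only [interedges_def, sum_filter, sum_product]

theorem card_interedges_eq_sum (s t : Finset V) :
    #(G.interedges s t) = ∑ a ∈ s, #{b ∈ t | G.Adj a b} := by
  simp only [card_eq_sum_ones, G.sum_interedges]

variable {G} in
theorem cons_mem_transversalCliques {n : ℕ} {A : Fin (n + 1) → Finset V} {a : V}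
    {g : Fin n → V} :
    Fin.cons a g ∈ G.transversalCliques A ↔
      a ∈ A 0 ∧ g ∈ G.transversalCliques fun i => {v ∈ A i.succ | G.Adj a v} := by
  simp only [mem_transversalCliques, Fin.forall_fin_succ, pairwise_fin_succ_iff,
    Fin.cons_zero, Fin.cons_succ, mem_filter, G.adj_comm _ a, forall_and]
  tauto

theorem card_transversalCliques_succ {n : ℕ} (A : Fin (n + 1) → Finset V) :
    #(G.transversalCliques A) =
      ∑ a ∈ A 0, #(G.transversalCliques fun i => {v ∈ A i.succ | G.Adj a v}) := by
  rw [← card_sigma]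
  refine card_nbij' (fun f => ⟨f 0, Fin.tail f⟩) (fun p => Fin.cons p.1 p.2) ?_ ?_ ?_ ?_
  · intro f hf
    rw [mem_coe, ← Fin.cons_self_tail f, cons_mem_transversalCliques] at hf
    simpa using hf
  · intro p hp
    simpa [cons_mem_transversalCliques] using hp
  · intro f _
    simp
  · intro p _
    simp

theorem card_transversalCliques_one (A : Fin 1 → Finset V) :
    #(G.transversalCliques A) = #(A 0) := by
  simp [card_transversalCliques_succ, card_transversalCliques_zero]

theorem card_transversalCliques_add_two {n : ℕ} (A : Fin (n + 2) → Finset V) :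
    #(G.transversalCliques A) = ∑ p ∈ G.interedges (A 0) (A 1),
      #(G.transversalCliques fun i => {v ∈ A i.succ.succ | G.Adj p.1 v ∧ G.Adj p.2 v}) := by
  simp only [sum_interedges, card_transversalCliques_succ G A, card_transversalCliques_succ,
    filter_filter]
  rfl

theorem sq_card_transversalCliques_le (A : Fin 3 → Finset V) :
    #(G.transversalCliques A) ^ 2 ≤ #(G.interedges (A 0) (A 1)) *
      (#(G.interedges (A 0) (A 2)) * #(G.interedges (A 1) (A 2))) := by
  set E := G.interedges (A 0) (A 1)
  set d : V → ℕ := fun x => #{v ∈ A 2 | G.Adj x v}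
  set c : V × V → ℕ := fun p => #{v ∈ A 2 | G.Adj p.1 v ∧ G.Adj p.2 v}
  have hT : #(G.transversalCliques A) = ∑ p ∈ E, c p := by
    simp only [card_transversalCliques_add_two, card_transversalCliques_one]
    rfl
  have hc : ∀ p, c p ^ 2 ≤ d p.1 * d p.2 := fun p => by
    rw [sq]
    exact Nat.mul_le_mul (card_le_card (monotone_filter_right _ fun _ _ h => h.1))
      (card_le_card (monotone_filter_right _ fun _ _ h => h.2))
  calc #(G.transversalCliques A) ^ 2 ≤ #E * ∑ p ∈ E, c p ^ 2 :=
        hT ▸ sq_sum_le_card_mul_sum_sq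
    _ ≤ #E * ∑ p ∈ A 0 ×ˢ A 1, d p.1 * d p.2 := by
      gcongr
      calc ∑ p ∈ E, c p ^ 2 ≤ ∑ p ∈ E, d p.1 * d p.2 := sum_le_sum fun p _ => hc p
        _ ≤ _ := sum_le_sum_of_subset (filter_subset _ _)
    _ = #E * (#(G.interedges (A 0) (A 2)) * #(G.interedges (A 1) (A 2))) := by
      simp only [sum_product, ← sum_mul_sum, d, card_interedges_eq_sum]

theorem card_cliqueFinset_le_card_transversalCliques [Fintype V] [DecidableEq V] {r : ℕ}
    (U : Fin r → Finset V) (hcover : ∀ v, ∃ i, v ∈ U i)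
    (hindep : ∀ i, ∀ x ∈ U i, ∀ y ∈ U i, ¬ G.Adj x y) :
    #(G.cliqueFinset r) ≤ #(G.transversalCliques U) := by
  choose part hpart using hcover
  refine card_le_card_of_surjOn (fun f => univ.image f) fun s hs => ?_
  obtain ⟨hclique, hcard⟩ := mem_cliqueFinset_iff.1 hs
  have hinj : Set.InjOn part s := fun x hx y hy hxy => by_contra fun hne =>
    hindep _ x (hpart x) y (hxy ▸ hpart y) (hclique hx hy hne)
  have hsurj : Set.SurjOn part s (univ : Finset (Fin r)) :=
    surjOn_of_injOn_of_card_le part (fun _ _ => mem_coe.2 (mem_univ _)) hinj (by simp [hcard])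
  choose f hfs hpart_f using fun i => hsurj (mem_coe.2 (mem_univ i))
  have hf_inj : f.Injective := Function.LeftInverse.injective hpart_f
  refine ⟨f, mem_transversalCliques.2 ⟨fun i => by simpa only [hpart_f] using hpart (f i),
    fun i j hij => hclique (hfs i) (hfs j) (hf_inj.ne hij)⟩, ?_⟩
  exact eq_of_subset_of_card_le (image_subset_iff.2 fun i _ => hfs i)
    (by rw [hcard, card_image_of_injective _ hf_inj, card_univ, Fintype.card_fin])

variable {G} {ℓ : ℝ}

theorem card_transversalCliques_three_le (hℓ : 0 ≤ ℓ) (A : Fin 3 → Finset V)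
    (hA : ∀ i j, i < j → (#(G.interedges (A i) (A j)) : ℝ) ≤ ℓ) :
    (#(G.transversalCliques A) : ℝ) ≤ ℓ ^ ((3 : ℝ) / 2) := by
  have hsq : (#(G.transversalCliques A) : ℝ) ^ 2 ≤ ℓ ^ 3 := by
    calc (#(G.transversalCliques A) : ℝ) ^ 2 ≤ #(G.interedges (A 0) (A 1)) *
          (#(G.interedges (A 0) (A 2)) * #(G.interedges (A 1) (A 2))) := by
          exact_mod_cast G.sq_card_transversalCliques_le A
      _ ≤ ℓ * (ℓ * ℓ) := by gcongr <;> exact hA _ _ (by decide)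
      _ = ℓ ^ 3 := by ring
  calc (#(G.transversalCliques A) : ℝ) ≤ √(ℓ ^ 3) := Real.le_sqrt_of_sq_le hsq
    _ = ℓ ^ ((3 : ℝ) / 2) := by
      rw [Real.sqrt_eq_rpow, ← Real.rpow_natCast, ← Real.rpow_mul hℓ]
      norm_num

theorem card_transversalCliques_le_rpow (hℓ : 0 ≤ ℓ) :
    ∀ {n : ℕ}, n ≠ 1 → ∀ A : Fin n → Finset V,
    (∀ i j, i < j → (#(G.interedges (A i) (A j)) : ℝ) ≤ ℓ) →
      (#(G.transversalCliques A) : ℝ) ≤ ℓ ^ ((n : ℝ) / 2)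
  | 0, _, A, _ => by simp [card_transversalCliques_zero]
  | 1, h, _, _ => absurd rfl h
  | n + 2, _, A, hA => by
    obtain rfl | hn := eq_or_ne n 1
    · exact_mod_cast card_transversalCliques_three_le hℓ A hA
    set E := G.interedges (A 0) (A 1)
    have hlink : ∀ p ∈ E, (#(G.transversalCliques fun i =>
        {v ∈ A i.succ.succ | G.Adj p.1 v ∧ G.Adj p.2 v}) : ℝ) ≤ ℓ ^ ((n : ℝ) / 2) :=
      fun p _ => card_transversalCliques_le_rpow hℓ hn _ fun i j hij =>
        (Nat.cast_le.2 <| card_le_card <|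
          interedges_mono _ (filter_subset _ _) (filter_subset _ _)).trans
          (hA _ _ (Fin.succ_lt_succ_iff.2 (Fin.succ_lt_succ_iff.2 hij)))
    calc (#(G.transversalCliques A) : ℝ)
        = ∑ p ∈ E, (#(G.transversalCliques fun i =>
            {v ∈ A i.succ.succ | G.Adj p.1 v ∧ G.Adj p.2 v}) : ℝ) := by
          rw [card_transversalCliques_add_two, Nat.cast_sum]
      _ ≤ #E * ℓ ^ ((n : ℝ) / 2) := by
          simpa only [sum_const, nsmul_eq_mul] using sum_le_sum hlink
      _ ≤ ℓ * ℓ ^ ((n : ℝ) / 2) := by gcongr; exact hA 0 1 Fin.zero_lt_one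
      _ = ℓ ^ (((n + 2 : ℕ) : ℝ) / 2) := by
          rw [show ((n + 2 : ℕ) : ℝ) / 2 = 1 + n / 2 by push_cast; ring,
            Real.rpow_add' hℓ (by positivity), Real.rpow_one]

end SimpleGraph

theorem clique_count_of_partite_bound_general {V : Type*} [Fintype V] [DecidableEq V]
    (G : SimpleGraph V) [DecidableRel G.Adj] (r : ℕ) (hr : 2 ≤ r) (ℓ : ℝ) (hℓ : 0 ≤ ℓ)
    (U : Fin r → Finset V)
    (hcover : ∀ v : V, ∃ i : Fin r, v ∈ U i)
    (hindep : ∀ i : Fin r, ∀ x ∈ U i, ∀ y ∈ U i, ¬ G.Adj x y)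
    (hedges : ∀ i j : Fin r, i < j →
      (((U i ×ˢ U j).filter fun q => G.Adj q.1 q.2).card : ℝ) ≤ ℓ) :
    ((G.cliqueFinset r).card : ℝ) ≤ ℓ ^ ((r : ℝ) / 2) :=
  calc ((G.cliqueFinset r).card : ℝ) ≤ #(G.transversalCliques U) := by
        exact_mod_cast G.card_cliqueFinset_le_card_transversalCliques U hcover hindep
    _ ≤ ℓ ^ ((r : ℝ) / 2) := G.card_transversalCliques_le_rpow hℓ (by omega) U hedges

/-- a theorem of Alon, as used in Section 7 of DeMarco–Kahn.
An `r`-partite graph with at most `ℓ` edges between any two of its parts contains at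
most `ℓ^{r/2}` copies of `K_r`. -/
theorem clique_count_of_partite_bound {V : Type*} [Fintype V] [DecidableEq V]
    (G : SimpleGraph V) [DecidableRel G.Adj] (r : ℕ) (hr : 2 ≤ r) (ℓ : ℝ) (hℓ : 0 ≤ ℓ)
    (U : Fin r → Finset V)
    (hdisj : ∀ i j : Fin r, i ≠ j → Disjoint (U i) (U j))
    (hcover : ∀ v : V, ∃ i : Fin r, v ∈ U i)
    (hindep : ∀ i : Fin r, ∀ x ∈ U i, ∀ y ∈ U i, ¬ G.Adj x y)
    (hedges : ∀ i j : Fin r, i < j →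
      (((U i ×ˢ U j).filter fun q => G.Adj q.1 q.2).card : ℝ) ≤ ℓ) :
    ((G.cliqueFinset r).card : ℝ) ≤ ℓ ^ ((r : ℝ) / 2) :=
  clique_count_of_partite_bound_general G r hr ℓ hℓ U hcover hindep hedges
end

section
/- Fix c < 1 and q ∈ (0,1), and let n be a positive integer with e·n·q^c < 1. Let S be a random subset of an n-element set in which the events {x ∈ S} (for the n elements x) are independent and each satisfies Pr(x ∈ S) ≤ q. Then for every positive integer T, Pr( |S| ≥ T ) ≤ q^{(1−c)T}. -/
open MeasureTheory Real
open scoped Classical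

/-- Lemma 3.2 of DeMarco–Kahn.  Fix `c < 1` and `q ∈ (0,1)` with
`e·n·q^c < 1`.  If `S ⊆ V`, `|V| = n`, is random with the events `{x ∈ S}` independent
and each of probability at most `q`, then `Pr(|S| ≥ T) ≤ q^{(1−c)T}`. -/
theorem random_subset_size_bound {Ω : Type*} [MeasurableSpace Ω]
    (μ : MeasureTheory.Measure Ω) [MeasureTheory.IsProbabilityMeasure μ]
    (c q : ℝ) (hc : c < 1) (hq0 : 0 < q) (hq1 : q < 1)
    (n : ℕ) (hn : 0 < n) (hsmall : Real.exp 1 * n * q ^ c < 1)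
    (A : Fin n → Set Ω) (hmeas : ∀ x : Fin n, MeasurableSet (A x))
    (hindep : ProbabilityTheory.iIndepSet A μ)
    (hprob : ∀ x : Fin n, μ (A x) ≤ ENNReal.ofReal q)
    (T : ℕ) (hT : 0 < T) :
    μ {ω | T ≤ (Finset.univ.filter fun x : Fin n => ω ∈ A x).card} ≤
      ENNReal.ofReal (q ^ ((1 - c) * (T : ℝ))) := by
  have hkey : (n.choose T : ℝ) * q ^ T ≤ q ^ ((1 - c) * (T : ℝ)) := by
    have hnqc : (n : ℝ) * q ^ c < 1 := by
      have h1 : (n : ℝ) * q ^ c ≤ Real.exp 1 * n * q ^ c := by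
        have : (1:ℝ) ≤ Real.exp 1 := by
          have := Real.add_one_le_exp (1:ℝ); linarith
        rw [mul_assoc]
        exact le_mul_of_one_le_left (by positivity) this
      linarith
    have hnqc0 : (0:ℝ) ≤ (n : ℝ) * q ^ c :=
      mul_nonneg (n.cast_nonneg) (Real.rpow_pos_of_pos hq0 c).le
    have hchoose : (n.choose T : ℝ) ≤ (n:ℝ) ^ T := by
      exact_mod_cast Nat.cast_le.2 (Nat.choose_le_pow n T)
    have hsplit : (n:ℝ) ^ T * q ^ T = ((n:ℝ) * q ^ c) ^ T * q ^ ((1 - c) * (T:ℝ)) := by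
      have hq : q ^ (T:ℝ) = q ^ (c * T) * q ^ ((1 - c) * (T:ℝ)) := by
        rw [← Real.rpow_add hq0]; ring_nf
      have h2 : q ^ (c * (T:ℝ)) = (q ^ c) ^ T := by
        rw [Real.rpow_mul hq0.le, Real.rpow_natCast]
      rw [mul_pow, ← Real.rpow_natCast q T, hq, h2]; ring
    have hpow1 : ((n:ℝ) * q ^ c) ^ T ≤ 1 := pow_le_one₀ hnqc0 hnqc.le
    have hqT : (0:ℝ) ≤ q ^ T := by positivity
    calc (n.choose T : ℝ) * q ^ T ≤ (n:ℝ) ^ T * q ^ T :=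
          mul_le_mul_of_nonneg_right hchoose hqT
      _ = ((n:ℝ) * q ^ c) ^ T * q ^ ((1 - c) * (T:ℝ)) := hsplit
      _ ≤ 1 * q ^ ((1 - c) * (T:ℝ)) := by
          exact mul_le_mul_of_nonneg_right hpow1 (Real.rpow_nonneg hq0.le _)
      _ = q ^ ((1 - c) * (T:ℝ)) := one_mul _
  set P := Finset.powersetCard T (Finset.univ : Finset (Fin n)) with hP
  have hsub : {ω | T ≤ (Finset.univ.filter fun x : Fin n => ω ∈ A x).card} ⊆
      ⋃ s ∈ P, ⋂ x ∈ s, A x := by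
    intro ω hω
    obtain ⟨s, hs, hcard⟩ := Finset.exists_subset_card_eq hω
    refine Set.mem_iUnion₂.2 ⟨s, ?_, ?_⟩
    · simp [hP, Finset.mem_powersetCard, hcard]
    · exact Set.mem_iInter₂.2 fun x hx => (Finset.mem_filter.1 (hs hx)).2
  calc μ {ω | T ≤ (Finset.univ.filter fun x : Fin n => ω ∈ A x).card}
      ≤ μ (⋃ s ∈ P, ⋂ x ∈ s, A x) := measure_mono hsub
    _ ≤ ∑ s ∈ P, μ (⋂ x ∈ s, A x) := measure_biUnion_finset_le _ _
    _ ≤ ∑ s ∈ P, ENNReal.ofReal q ^ T := by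
        refine Finset.sum_le_sum fun s hs => ?_
        have hcard : s.card = T := (Finset.mem_powersetCard.1 hs).2
        rw [hindep.meas_biInter s, ← hcard, ← Finset.prod_const]
        exact Finset.prod_le_prod' fun x _ => hprob x
    _ = ((n.choose T : ℕ) : ENNReal) * ENNReal.ofReal q ^ T := by
        rw [Finset.sum_const, hP, Finset.card_powersetCard, Finset.card_univ,
          Fintype.card_fin, nsmul_eq_mul]
    _ ≤ ENNReal.ofReal (q ^ ((1 - c) * (T : ℝ))) := by
        rw [← ENNReal.ofReal_pow hq0.le, ← ENNReal.ofReal_natCast,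
          ← ENNReal.ofReal_mul (by positivity)]
        exact ENNReal.ofReal_le_ofReal hkey
end
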